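/- arXiv:2204.10718 — 2 statements merged into one kernel-verified Lean document; each statement's English description precedes it below -/
import Mathlib

section
/- Let A be an n×n matrix over a commutative ring and let t ≥ 1. Then det_n(A ⊗ J_t) = t^n · det(A), i.e., the sum of det((A ⊗ J_t)[S]) over all n-element subsets S of [n] × [t] equals t^n · det(A). -/
/-- The `k`-partial determinant: the sum of `det A[S]` over all `k`-element index
subsets `S`, where `A[S]` is the principal submatrix on rows and columns in `S`. -/
def pdet {I : Type*} [Fintype I] [DecidableEq I] {R : Type*} [CommRing R]
    (k : ℕ) (A : Matrix I I R) : R :=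
  ∑ S ∈ Finset.powersetCard k Finset.univ,
    (A.submatrix (fun i : {x : I // x ∈ S} => i.1) (fun i : {x : I // x ∈ S} => i.1)).det

/-- The Kronecker product `A ⊗ J_t` of `A` with the `t × t` all-ones matrix:
the entry at row `(i,a)`, column `(j,b)` is `A i j`. -/
def kronOnes {n : ℕ} {R : Type*} [CommSemiring R] (A : Matrix (Fin n) (Fin n) R) (t : ℕ) :
    Matrix (Fin n × Fin t) (Fin n × Fin t) R :=
  Matrix.of fun p q => A p.1 q.1

theorem pdet_kronOnes_eq_pow_mul_det {n t : ℕ} {R : Type*} [CommRing R]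
    (ht : 1 ≤ t) (A : Matrix (Fin n) (Fin n) R) :
    pdet n (kronOnes A t) = (t : R) ^ n * A.det := by
  classical
  set D : Finset (Fin n × Fin t) → R := fun S =>
    ((kronOnes A t).submatrix (fun i : {x // x ∈ S} => i.1)
      (fun i : {x // x ∈ S} => i.1)).det with hD
  set good : Finset (Fin n × Fin t) → Prop := fun S =>
    ∀ x ∈ S, ∀ y ∈ S, x.1 = y.1 → x = y with hgood
  have hzero : ∀ S ∈ Finset.powersetCard n (Finset.univ : Finset (Fin n × Fin t)),
      D S ≠ 0 → good S := by
    intro S _ hne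
    show ∀ x ∈ S, ∀ y ∈ S, x.1 = y.1 → x = y
    intro x hx y hy hxy
    by_contra hxy'
    apply hne
    apply Matrix.det_zero_of_row_eq (i := (⟨x, hx⟩ : {z // z ∈ S})) (j := ⟨y, hy⟩)
    · simp [Subtype.ext_iff, hxy']
    · funext j
      simp [kronOnes, Matrix.submatrix_apply, hxy]
  have hfilter := Finset.sum_filter_of_ne (p := good) hzero
  have h1 : pdet n (kronOnes A t)
      = ∑ S ∈ (Finset.powersetCard n (Finset.univ : Finset (Fin n × Fin t))).filter good,
          D S := hfilter.symm
  rw [h1]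
  have h2 : (t : R) ^ n * A.det = ∑ _f : Fin n → Fin t, A.det := by
    simp [Finset.sum_const, Finset.card_univ, mul_comm]
  rw [h2]
  refine (Finset.sum_bij
    (fun (f : Fin n → Fin t) _ => Finset.image (fun i => (i, f i)) Finset.univ)
    ?_ ?_ ?_ ?_).symm
  · -- membership
    intro f _
    rw [Finset.mem_filter, Finset.mem_powersetCard]
    refine ⟨⟨Finset.subset_univ _, ?_⟩, ?_⟩
    · rw [Finset.card_image_of_injective _ (fun a b h => (Prod.mk.injEq _ _ _ _).mp h |>.1)]
      simp
    · intro x hx y hy hxy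
      simp only [Finset.mem_image, Finset.mem_univ, true_and] at hx hy
      obtain ⟨i, rfl⟩ := hx
      obtain ⟨j, rfl⟩ := hy
      simp only at hxy
      subst hxy
      rfl
  · -- injectivity
    intro f _ g _ h
    funext i
    have h' : Finset.image (fun i => (i, f i)) Finset.univ
        = Finset.image (fun j => (j, g j)) Finset.univ := h
    have : (i, f i) ∈ Finset.image (fun j => (j, g j)) Finset.univ := by
      rw [← h']; exact Finset.mem_image_of_mem _ (Finset.mem_univ i)
    simp only [Finset.mem_image, Finset.mem_univ, true_and] at this
    obtain ⟨j, hj⟩ := this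
    have h1 := congrArg Prod.fst hj
    have h2 := congrArg Prod.snd hj
    simp only at h1 h2
    rw [← h2, h1]
  · -- surjectivity
    intro S hS
    rw [Finset.mem_filter, Finset.mem_powersetCard] at hS
    obtain ⟨⟨-, hcard⟩, hg⟩ := hS
    have hinj : Function.Injective (fun x : {z // z ∈ S} => x.1.1) := by
      intro x y hxy
      exact Subtype.ext (hg x.1 x.2 y.1 y.2 hxy)
    have hcard' : Fintype.card {z // z ∈ S} = Fintype.card (Fin n) := by
      simp [Fintype.card_coe, hcard]
    have hbij : Function.Bijective (fun x : {z // z ∈ S} => x.1.1) :=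
      (Fintype.bijective_iff_injective_and_card _).mpr ⟨hinj, hcard'⟩
    let e := Equiv.ofBijective _ hbij
    refine ⟨fun i => ((e.symm i) : {z // z ∈ S}).1.2, Finset.mem_univ _, ?_⟩
    have hsub : Finset.image (fun i => (i, ((e.symm i) : {z // z ∈ S}).1.2)) Finset.univ ⊆ S := by
      intro x hx
      simp only [Finset.mem_image, Finset.mem_univ, true_and] at hx
      obtain ⟨i, rfl⟩ := hx
      have heq : (i, ((e.symm i) : {z // z ∈ S}).1.2) = ((e.symm i) : {z // z ∈ S}).1 :=
        Prod.ext (e.apply_symm_apply i).symm rfl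
      rw [heq]
      exact ((e.symm i) : {z // z ∈ S}).2
    apply Finset.eq_of_subset_of_card_le hsub
    rw [hcard, Finset.card_image_of_injective _ (fun a b h => (Prod.mk.injEq _ _ _ _).mp h |>.1)]
    simp
  · -- values
    intro f _
    have hmem : ∀ i : Fin n, (i, f i) ∈ Finset.image (fun j => (j, f j)) Finset.univ := fun i =>
      Finset.mem_image_of_mem _ (Finset.mem_univ i)
    let e : Fin n ≃ {x // x ∈ Finset.image (fun j => (j, f j)) Finset.univ} :=
      { toFun := fun i => ⟨(i, f i), hmem i⟩
        invFun := fun x => x.1.1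
        left_inv := fun i => rfl
        right_inv := fun x => by
          obtain ⟨⟨i, a⟩, hx⟩ := x
          simp only [Finset.mem_image, Finset.mem_univ, true_and] at hx
          obtain ⟨j, hj⟩ := hx
          cases hj
          rfl }
    have hdet := Matrix.det_submatrix_equiv_self e
      ((kronOnes A t).submatrix
        (fun i : {x // x ∈ Finset.image (fun j => (j, f j)) Finset.univ} => i.1)
        (fun i : {x // x ∈ Finset.image (fun j => (j, f j)) Finset.univ} => i.1))
    have heq : (((kronOnes A t).submatrix
        (fun i : {x // x ∈ Finset.image (fun j => (j, f j)) Finset.univ} => i.1)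
        (fun i : {x // x ∈ Finset.image (fun j => (j, f j)) Finset.univ} => i.1)).submatrix e e)
        = A := by
      ext i j
      rfl
    rw [heq] at hdet
    show A.det = D (Finset.image (fun i => (i, f i)) Finset.univ)
    rw [hD]
    exact hdet
end

section
/- Let λ be a partition of k ≥ 1, let C_λ be the disjoint union of directed cycles with one s-cycle per part s of λ, and let A = (a_{i,j}) be an n×n matrix over a commutative ring. Then emb(C_λ → A) = ( ∏_{ℓ=1}^{k} s_ℓ(λ)! · ℓ^{s_ℓ(λ)} ) · Σ_{S ⊆ [n], |S| = k} Σ_{π ∈ Perm(S), cycleType(π) = λ} ∏_{i ∈ S} a_{i, π(i)}, where the inner sums range over k-element subsets S of [n] and permutations π of S whose cycle type equals λ. -/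
/-- A multigraph: a finite vertex type together with a multiset of directed edges
(self-loops and parallel edges allowed). -/
structure Multigraph where
  V : Type
  [fintypeV : Fintype V]
  [decEqV : DecidableEq V]
  E : Multiset (V × V)

attribute [instance] Multigraph.fintypeV Multigraph.decEqV

/-- Weighted embedding count `emb(F → A)`: sum over all injective vertex maps of the
product of edge weights (with multiplicity over the edge multiset). -/
noncomputable def embCount {R : Type*} [CommSemiring R] (F : Multigraph) {I : Type*} [Fintype I]
    [DecidableEq I] (A : Matrix I I R) : R :=
  ∑ f : F.V ↪ I, (F.E.map fun e => A (f e.1) (f e.2)).prod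

/-- The disjoint union of directed cycles with one `s`-cycle for each part `s` of the
multiset `m` (with multiplicity): vertex set indexed by (cycle index, position in cycle). -/
def cycleCoverGraph (m : Multiset ℕ) : Multigraph where
  V := (i : Fin (m.sort (· ≤ ·)).length) × Fin ((m.sort (· ≤ ·)).get i)
  E := Finset.univ.val.map
    fun p : (i : Fin (m.sort (· ≤ ·)).length) × Fin ((m.sort (· ≤ ·)).get i) =>
      (p, ⟨p.1, finRotate _ p.2⟩)

/-- The full cycle type of a permutation: the multiset of lengths of all its cycles,
where fixed points count as cycles of length 1. -/
def fullCycleType {α : Type*} [Fintype α] [DecidableEq α] (π : Equiv.Perm α) : Multiset ℕ :=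
  π.cycleType + Multiset.replicate (Fintype.card α - π.support.card) 1


set_option linter.unusedSectionVars false
set_option maxHeartbeats 1000000

open Equiv Equiv.Perm Finset
open Fin.NatCast

namespace EmbAux

variable (l : List ℕ)

abbrev Vty := (i : Fin l.length) × Fin (l.get i)

def rho : Equiv.Perm (Vty l) := Equiv.sigmaCongrRight (fun i => finRotate (l.get i))

@[simp] lemma rho_apply (p : Vty l) : rho l p = ⟨p.1, finRotate _ p.2⟩ := rfl

lemma finRotate_apply_pos {m : ℕ} [NeZero m] (j : Fin m) : finRotate m j = j + 1 := by
  rcases m with _ | n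
  · exact absurd rfl (NeZero.ne 0)
  · exact finRotate_succ_apply j

lemma finRotate_pow_apply {m : ℕ} [NeZero m] (t : ℕ) (j : Fin m) :
    (finRotate m ^ t) j = j + (t : Fin m) := by
  induction t with
  | zero => simp
  | succ t ih =>
    rw [pow_succ', Equiv.Perm.mul_apply, ih, finRotate_apply_pos, Nat.cast_add, Nat.cast_one]
    exact add_assoc _ _ _

lemma rho_pow_apply (t : ℕ) (p : Vty l) :
    (rho l ^ t) p = ⟨p.1, (finRotate (l.get p.1) ^ t) p.snd⟩ := by
  induction t with
  | zero => simp
  | succ t ih => rw [pow_succ', Equiv.Perm.mul_apply, ih, pow_succ']; rfl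

section Centralizer

variable {l}
variable (hl : ∀ i : Fin l.length, 0 < l.get i)
include hl

/-- base point of each fiber -/
def z (i : Fin l.length) : Fin (l.get i) := ⟨0, hl i⟩

lemma z_eq_zero (i : Fin l.length) :
    haveI : NeZero (l.get i) := ⟨(hl i).ne'⟩
    z hl i = 0 := by
  haveI : NeZero (l.get i) := ⟨(hl i).ne'⟩
  ext
  simp [z]

lemma reach (i : Fin l.length) (j : Fin (l.get i)) :
    (rho l ^ (j : ℕ)) ⟨i, z hl i⟩ = ⟨i, j⟩ := by
  haveI : NeZero (l.get i) := ⟨(hl i).ne'⟩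
  have h2 : z hl i + ((j : ℕ) : Fin (l.get i)) = j := by
    rw [z_eq_zero hl i, zero_add, Fin.cast_val_eq_self]
  rw [rho_pow_apply, finRotate_pow_apply, h2]

lemma exists_pow_eq {x y : Vty l} (h : x.1 = y.1) : ∃ t : ℕ, (rho l ^ t) x = y := by
  rcases x with ⟨u, a⟩
  rcases y with ⟨v, b⟩
  obtain rfl : u = v := h
  haveI : NeZero (l.get u) := ⟨(hl u).ne'⟩
  refine ⟨((b - a : Fin (l.get u)) : ℕ), ?_⟩
  rw [rho_pow_apply, finRotate_pow_apply, Fin.cast_val_eq_self]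
  congr 1
  exact add_sub_cancel a b

variable (c : Equiv.Perm (Vty l)) (hc : ∀ p, c (rho l p) = rho l (c p))
include hc

omit hl in
lemma comm_pow (t : ℕ) (p : Vty l) : c ((rho l ^ t) p) = (rho l ^ t) (c p) := by
  induction t with
  | zero => simp
  | succ t ih => rw [pow_succ', Equiv.Perm.mul_apply, Equiv.Perm.mul_apply, ← ih, ← hc]

omit hl in
lemma inv_comm (p : Vty l) : c⁻¹ (rho l p) = rho l (c⁻¹ p) := by
  conv_lhs => rw [show p = c (c⁻¹ p) from (Equiv.apply_symm_apply c p).symm, ← hc]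
  simp

/-- the induced map on cycle indices -/
def sigmaFun (i : Fin l.length) : Fin l.length := (c ⟨i, z hl i⟩).1

lemma fst_const (i : Fin l.length) (j : Fin (l.get i)) :
    (c ⟨i, j⟩).1 = sigmaFun hl c i := by
  conv_lhs => rw [← reach hl i j, comm_pow c hc, rho_pow_apply]
  rfl

lemma sigmaFun_injective : Function.Injective (sigmaFun hl c) := by
  intro i i' h
  obtain ⟨t, ht⟩ := exists_pow_eq hl (x := c ⟨i, z hl i⟩) (y := c ⟨i', z hl i'⟩) h
  rw [← comm_pow c hc] at ht
  have := c.injective ht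
  have := congrArg Sigma.fst this
  rwa [rho_pow_apply] at this

lemma snd_lt (i : Fin l.length) (j : Fin (l.get i)) :
    ((c ⟨i, j⟩).2 : ℕ) < l.get (sigmaFun hl c i) := by
  rw [← fst_const hl c hc]
  exact (c ⟨i, j⟩).2.isLt

omit hl hc in
lemma vty_ext {x y : Vty l} (h1 : x.1 = y.1) (h2 : (x.2 : ℕ) = (y.2 : ℕ)) : x = y := by
  rcases x with ⟨u, a⟩
  rcases y with ⟨v, b⟩
  obtain rfl : u = v := h1
  obtain rfl : a = b := Fin.ext h2
  rfl

lemma get_sigmaFun_le (i : Fin l.length) : l.get i ≤ l.get (sigmaFun hl c i) := by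
  have hinj : Function.Injective
      (fun j : Fin (l.get i) => (⟨((c ⟨i, j⟩).2 : ℕ), snd_lt hl c hc i j⟩ :
        Fin (l.get (sigmaFun hl c i)))) := by
    intro j j' h
    have h2 : ((c ⟨i, j⟩).2 : ℕ) = ((c ⟨i, j'⟩).2 : ℕ) := congrArg Fin.val h
    have := c.injective (vty_ext ((fst_const hl c hc i j).trans
      (fst_const hl c hc i j').symm) h2)
    exact (Sigma.mk.inj_iff.mp this).2.eq
  simpa using Fintype.card_le_of_injective _ hinj

lemma sigmaFun_inv_apply (i : Fin l.length) :
    sigmaFun hl c⁻¹ (sigmaFun hl c i) = i := by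
  have h1 := (fst_const hl c⁻¹ (inv_comm c hc) (sigmaFun hl c i) (z hl _)).trans
    (fst_const hl c⁻¹ (inv_comm c hc) (sigmaFun hl c i)
      ((c ⟨i, z hl i⟩).2 : Fin (l.get (sigmaFun hl c i)))).symm
  show (c⁻¹ ⟨sigmaFun hl c i, z hl (sigmaFun hl c i)⟩).1 = i
  rw [h1]
  show (c⁻¹ (c ⟨i, z hl i⟩)).1 = i
  simp

lemma get_sigmaFun_eq (i : Fin l.length) : l.get (sigmaFun hl c i) = l.get i := by
  refine le_antisymm ?_ (get_sigmaFun_le hl c hc i)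
  have h2 := get_sigmaFun_le hl c⁻¹ (inv_comm c hc) (sigmaFun hl c i)
  rwa [sigmaFun_inv_apply hl c hc i] at h2

/-- the induced permutation on cycle indices -/
noncomputable def sigmaPerm : Equiv.Perm (Fin l.length) :=
  Equiv.ofBijective (sigmaFun hl c)
    (Finite.injective_iff_bijective.mp (sigmaFun_injective hl c hc))

omit hl hc in
lemma cast_add_one {m m' : ℕ} [NeZero m] [NeZero m'] (h : m = m') (a : Fin m) :
    Fin.cast h (a + 1) = Fin.cast h a + 1 := by subst h; apply Fin.ext; simp

omit hl hc in
lemma cast_add_natCast {m m' : ℕ} [NeZero m'] (h : m' = m) (a : Fin m') (j : Fin m) :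
    Fin.cast h.symm (Fin.cast h a + j) = a + ((j : ℕ) : Fin m') := by
  subst h
  rw [Fin.cast_val_eq_self]
  rfl

end Centralizer

section Back

variable {l}
variable (hl : ∀ i : Fin l.length, 0 < l.get i)
variable (σ : Equiv.Perm (Fin l.length)) (hσ : l.get ∘ σ = l.get)
variable (r : (i : Fin l.length) → Fin (l.get i))

def backFun : Vty l → Vty l := fun p =>
  ⟨σ p.1, Fin.cast (congrFun hσ p.1).symm (r p.1 + p.2)⟩

include hl in
lemma backFun_injective : Function.Injective (backFun σ hσ r) := by
  rintro ⟨u, a⟩ ⟨v, b⟩ h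
  have h1 : σ u = σ v := congrArg Sigma.fst h
  obtain rfl : u = v := σ.injective h1
  haveI : NeZero (l.get u) := ⟨(hl u).ne'⟩
  have h2 : ((r u + a : Fin (l.get u)) : ℕ) = ((r u + b : Fin (l.get u)) : ℕ) := by
    have := congrArg (fun x : Vty l => (x.2 : ℕ)) h
    simpa [backFun] using this
  have h3 : r u + a = r u + b := Fin.ext h2
  rw [add_left_cancel h3]

noncomputable def backPerm : Equiv.Perm (Vty l) :=
  Equiv.ofBijective (backFun σ hσ r)
    (Finite.injective_iff_bijective.mp (backFun_injective hl σ hσ r))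

lemma backPerm_apply (p : Vty l) :
    backPerm hl σ hσ r p = ⟨σ p.1, Fin.cast (congrFun hσ p.1).symm (r p.1 + p.2)⟩ := rfl

include hl in
lemma backPerm_comm (p : Vty l) :
    backPerm hl σ hσ r (rho l p) = rho l (backPerm hl σ hσ r p) := by
  rcases p with ⟨i, j⟩
  haveI : NeZero (l.get i) := ⟨(hl i).ne'⟩
  have hgs : l.get (σ i) = l.get i := congrFun hσ i
  haveI : NeZero (l.get (σ i)) := ⟨by rw [hgs]; exact (hl i).ne'⟩
  haveI : NeZero ((l.get ∘ ⇑σ) i) := ‹NeZero (l.get (σ i))›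
  show (⟨σ i, Fin.cast (congrFun hσ i).symm (r i + finRotate _ j)⟩ : Vty l)
      = ⟨σ i, finRotate _ (Fin.cast (congrFun hσ i).symm (r i + j))⟩
  refine congrArg (fun s => (⟨σ i, s⟩ : Vty l)) ?_
  rw [finRotate_apply_pos, finRotate_apply_pos, ← add_assoc,
    cast_add_one (congrFun hσ i).symm]

end Back

section CentCard

variable {l}
variable (hl : ∀ i : Fin l.length, 0 < l.get i)

/-- centralizer of `rho` is in bijection with (length-preserving perms) × (rotations) -/
noncomputable def centEquiv :
    {c : Equiv.Perm (Vty l) // ∀ p, c (rho l p) = rho l (c p)} ≃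
      ({σ : Equiv.Perm (Fin l.length) // l.get ∘ σ = l.get} ×
        ((i : Fin l.length) → Fin (l.get i))) where
  toFun c := (⟨sigmaPerm hl c.1 c.2, funext fun i => get_sigmaFun_eq hl c.1 c.2 i⟩,
    fun i => Fin.cast (get_sigmaFun_eq hl c.1 c.2 i) (c.1 ⟨i, z hl i⟩).2)
  invFun t := ⟨backPerm hl t.1.1 t.1.2 t.2, backPerm_comm hl t.1.1 t.1.2 t.2⟩
  left_inv := by
    rintro ⟨c, hc⟩
    apply Subtype.ext
    apply Equiv.ext
    rintro ⟨i, j⟩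
    haveI h0 : NeZero (l.get i) := ⟨(hl i).ne'⟩
    haveI : NeZero (l.get (sigmaFun hl c i)) :=
      ⟨by rw [get_sigmaFun_eq hl c hc i]; exact (hl i).ne'⟩
    haveI : NeZero (l.get (c ⟨i, z hl i⟩).1) :=
      ⟨by rw [show (c ⟨i, z hl i⟩).1 = sigmaFun hl c i from rfl, get_sigmaFun_eq hl c hc i]
          exact (hl i).ne'⟩
    have hq : c ⟨i, j⟩ =
        ⟨(c ⟨i, z hl i⟩).1,
          (c ⟨i, z hl i⟩).2 + ((j : ℕ) : Fin (l.get (c ⟨i, z hl i⟩).1))⟩ := by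
      conv_lhs => rw [← reach hl i j, comm_pow c hc, rho_pow_apply]
      rw [finRotate_pow_apply]
    rw [hq]
    exact congrArg (fun s => (⟨(c ⟨i, z hl i⟩).1, s⟩ : Vty l))
      (cast_add_natCast (get_sigmaFun_eq hl c hc i) ((c ⟨i, z hl i⟩).2) j)
  right_inv := by
    rintro ⟨⟨σ, hσ⟩, r⟩
    refine Prod.ext (Subtype.ext (Equiv.ext fun i => rfl)) (funext fun i => ?_)
    haveI : NeZero (l.get i) := ⟨(hl i).ne'⟩
    apply Fin.ext
    simp [sigmaPerm, backPerm, backFun, Equiv.ofBijective, z, Fin.add_def,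
      Nat.mod_eq_of_lt (r i).isLt]
    exact Nat.mod_eq_of_lt ((r i).isLt)

end CentCard


section CT

variable {l}

def fiberEquiv (i : Fin l.length) : Fin (l.get i) ≃ {p : Vty l // p.1 = i} where
  toFun j := ⟨⟨i, j⟩, rfl⟩
  invFun p := Fin.cast (congrArg l.get p.2) p.1.2
  left_inv j := rfl
  right_inv p := by
    rcases p with ⟨⟨u, a⟩, h⟩
    subst h
    rfl

def cyc (i : Fin l.length) : Equiv.Perm (Vty l) :=
  (finRotate (l.get i)).extendDomain (fiberEquiv i)

lemma cyc_apply_mem (i : Fin l.length) (j : Fin (l.get i)) :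
    cyc i ⟨i, j⟩ = ⟨i, finRotate _ j⟩ :=
  Equiv.Perm.extendDomain_apply_image _ _ _

lemma cyc_apply_not_mem (i : Fin l.length) (p : Vty l) (h : p.1 ≠ i) : cyc i p = p :=
  Equiv.Perm.extendDomain_apply_not_subtype _ _ h

lemma prod_cyc_apply (t : List (Fin l.length)) (ht : t.Nodup) (p : Vty l) :
    (t.map cyc).prod p = if p.1 ∈ t then ⟨p.1, finRotate _ p.2⟩ else p := by
  induction t with
  | nil => simp
  | cons i₀ t' ih =>
    rcases p with ⟨i, j⟩
    rw [List.map_cons, List.prod_cons, Equiv.Perm.mul_apply, ih ht.of_cons]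
    by_cases h : i = i₀
    · subst h
      have hni : i ∉ t' := (List.nodup_cons.mp ht).1
      simp only [List.mem_cons, true_or, if_true, if_neg hni]
      exact cyc_apply_mem i j
    · by_cases h2 : i ∈ t'
      · simp only [List.mem_cons, h, h2, or_true, if_pos]
        exact cyc_apply_not_mem i₀ _ h
      · simp only [List.mem_cons, h, h2, or_self, if_neg, not_false_iff]
        exact cyc_apply_not_mem i₀ _ h

variable (hl : ∀ i : Fin l.length, 0 < l.get i)
include hl

lemma rho_eq_prod :
    rho l = (((Finset.univ.filter fun i => 2 ≤ l.get i).toList.map cyc)).prod := by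
  apply Equiv.ext
  rintro ⟨i, j⟩
  rw [prod_cyc_apply _ (Finset.nodup_toList _)]
  simp only [Finset.mem_toList, Finset.mem_filter, Finset.mem_univ, true_and]
  by_cases h : 2 ≤ l.get i
  · rw [if_pos h]; rfl
  · rw [if_neg h]
    have h1 : l.get i = 1 := by have := hl i; omega
    haveI : Subsingleton (Fin (l.get i)) := by rw [h1]; infer_instance
    exact congrArg (fun s => (⟨i, s⟩ : Vty l)) (Subsingleton.elim _ _)

lemma cycleType_rho :
    (rho l).cycleType =
      ↑((Finset.univ.filter fun i => 2 ≤ l.get i).toList.map fun i => l.get i) := by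
  rw [Equiv.Perm.cycleType_eq ((Finset.univ.filter fun i => 2 ≤ l.get i).toList.map cyc)
    (rho_eq_prod hl).symm ?_ ?_]
  · rw [List.map_map]
    congr 1
    apply List.map_congr_left
    intro i hi
    rw [Finset.mem_toList, Finset.mem_filter] at hi
    have hcy : (cyc (l := l) i).cycleType = {l.get i} := by
      rw [cyc, Equiv.Perm.cycleType_extendDomain, cycleType_finRotate_of_le hi.2]
    have := Equiv.Perm.sum_cycleType (cyc (l := l) i)
    rw [hcy] at this
    simpa using this.symm
  · intro τ hτ
    rw [List.mem_map] at hτ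
    obtain ⟨i, hi, rfl⟩ := hτ
    rw [Finset.mem_toList, Finset.mem_filter] at hi
    exact (isCycle_finRotate_of_le hi.2).extendDomain _
  · rw [List.pairwise_map]
    refine List.Pairwise.imp ?_ (Finset.nodup_toList _)
    intro a b hab
    intro p
    by_cases h : p.1 = a
    · right; exact cyc_apply_not_mem b p (h ▸ hab)
    · left; exact cyc_apply_not_mem a p h

omit hl in
lemma univ_val_map_get : (Finset.univ.val.map l.get : Multiset ℕ) = ↑l := by
  rw [Fin.univ_def]
  show ((l.length.succ.pred |> fun _ => (↑(List.finRange l.length) : Multiset (Fin l.length))).map l.get) = ↑l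
  rw [Multiset.map_coe, List.map_get_finRange]

omit hl in
lemma card_Vty : Fintype.card (Vty l) = l.sum := by
  rw [Fintype.card_sigma]
  simp only [Fintype.card_fin]
  rw [Finset.sum, univ_val_map_get, Multiset.sum_coe]

end CT


section FCT

variable {l}

variable (hpos : ∀ x ∈ l, 0 < x)
include hpos

lemma hl_of_hpos : ∀ i : Fin l.length, 0 < l.get i := fun i => hpos _ (List.get_mem l i)

lemma big_filter_eq :
    (↑((Finset.univ.filter fun i => 2 ≤ l.get i).toList.map fun i => l.get i) : Multiset ℕ) =
      Multiset.filter (fun x => 2 ≤ x) ↑l := by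
  rw [← Multiset.map_coe, Finset.coe_toList, Finset.filter_val, ← univ_val_map_get,
    Multiset.filter_map]
  rfl

lemma fullCycleType_rho : fullCycleType (rho l) = ↑l := by
  have hl := hl_of_hpos hpos
  have hsupp : (rho l).support.card = (Multiset.filter (fun x => 2 ≤ x) (↑l : Multiset ℕ)).sum := by
    rw [← Equiv.Perm.sum_cycleType, cycleType_rho hl, big_filter_eq hpos]
  have hones : Multiset.filter (fun x => ¬ 2 ≤ x) (↑l : Multiset ℕ) =
      Multiset.replicate (Multiset.card (Multiset.filter (fun x => ¬ 2 ≤ x) (↑l : Multiset ℕ))) 1 := by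
    rw [Multiset.eq_replicate_card]
    intro b hb
    have h1 := Multiset.of_mem_filter hb
    have h2 := Multiset.mem_of_mem_filter hb
    have h3 : 0 < b := hpos b (by exact_mod_cast h2)
    omega
  have hsplit := Multiset.filter_add_not (fun x => 2 ≤ x) (↑l : Multiset ℕ)
  have hcard : Fintype.card (Vty l) - (rho l).support.card =
      Multiset.card (Multiset.filter (fun x => ¬ 2 ≤ x) (↑l : Multiset ℕ)) := by
    rw [card_Vty, hsupp]
    have : (Multiset.filter (fun x => 2 ≤ x) (↑l : Multiset ℕ)).sum +
        (Multiset.filter (fun x => ¬ 2 ≤ x) (↑l : Multiset ℕ)).sum = l.sum := by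
      rw [← Multiset.sum_add, hsplit, Multiset.sum_coe]
    have h2 : (Multiset.filter (fun x => ¬ 2 ≤ x) (↑l : Multiset ℕ)).sum =
        Multiset.card (Multiset.filter (fun x => ¬ 2 ≤ x) (↑l : Multiset ℕ)) := by
      rw [hones, Multiset.sum_replicate, smul_eq_mul, mul_one]
      rw [Multiset.card_replicate]
    omega
  rw [fullCycleType, cycleType_rho hl, big_filter_eq hpos, hcard, ← hones, hsplit]

end FCT

section PC
variable {α β : Type*} [Fintype α] [DecidableEq α] [Fintype β] [DecidableEq β]

lemma permCongr_eq_extendDomain (e : α ≃ β) (σ : Equiv.Perm α) :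
    e.permCongr σ =
      σ.extendDomain (e.trans (Equiv.subtypeUnivEquiv (fun _ : β => trivial)).symm) := by
  apply Equiv.ext
  intro b
  rw [Equiv.Perm.extendDomain_apply_subtype _ _ trivial]
  simp [Equiv.subtypeUnivEquiv]

lemma cycleType_permCongr (e : α ≃ β) (σ : Equiv.Perm α) :
    (e.permCongr σ).cycleType = σ.cycleType := by
  rw [permCongr_eq_extendDomain, Equiv.Perm.cycleType_extendDomain]

lemma fullCycleType_permCongr (e : α ≃ β) (σ : Equiv.Perm α) :
    fullCycleType (e.permCongr σ) = fullCycleType σ := by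
  rw [fullCycleType, fullCycleType, cycleType_permCongr, ← Equiv.Perm.sum_cycleType σ,
    ← Equiv.Perm.sum_cycleType (e.permCongr σ), cycleType_permCongr,
    Fintype.card_congr e.symm]

lemma cycleType_eq_filter_fullCycleType (σ : Equiv.Perm α) :
    σ.cycleType = Multiset.filter (fun x => 2 ≤ x) (fullCycleType σ) := by
  rw [fullCycleType, Multiset.filter_add,
    Multiset.filter_eq_self.mpr (fun x hx => Equiv.Perm.two_le_of_mem_cycleType hx),
    Multiset.filter_eq_nil.mpr (fun b hb => by
      rw [Multiset.eq_of_mem_replicate hb]; omega), add_zero]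

lemma sum_fullCycleType (σ : Equiv.Perm α) : (fullCycleType σ).sum = Fintype.card α := by
  rw [fullCycleType, Multiset.sum_add, Equiv.Perm.sum_cycleType, Multiset.sum_replicate,
    smul_eq_mul, mul_one]
  have := Finset.card_le_univ σ.support
  omega

lemma exists_conj {σ : Equiv.Perm α} {τ : Equiv.Perm β}
    (h : Fintype.card α = Fintype.card β) (hct : σ.cycleType = τ.cycleType) :
    ∃ g : α ≃ β, ∀ p, g (σ p) = τ (g p) := by
  have e := Fintype.equivOfCardEq h
  have hconj : IsConj (e.permCongr σ) τ :=
    Equiv.Perm.isConj_iff_cycleType_eq.mpr (by rw [cycleType_permCongr, hct])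
  obtain ⟨c, hc⟩ := isConj_iff.mp hconj
  refine ⟨e.trans c, fun p => ?_⟩
  have := congrFun (congrArg (fun (x : Equiv.Perm β) => (x : β → β)) hc) (c (e p))
  simp only [Equiv.Perm.mul_apply, Equiv.Perm.inv_def, Equiv.permCongr_apply,
    Equiv.symm_apply_apply] at this
  simpa using this

lemma card_semiconj {σ : Equiv.Perm α} {τ : Equiv.Perm β}
    (h : Fintype.card α = Fintype.card β) (hct : σ.cycleType = τ.cycleType) :
    Nat.card {g : α ≃ β // ∀ p, g (σ p) = τ (g p)} =
      Nat.card {c : Equiv.Perm α // ∀ p, c (σ p) = σ (c p)} := by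
  obtain ⟨g₀, hg₀⟩ := exists_conj h hct
  have hg₀' : ∀ y, σ (g₀.symm y) = g₀.symm (τ y) := fun y => by
    have := hg₀ (g₀.symm y)
    simp only [Equiv.apply_symm_apply] at this
    rw [← this, Equiv.symm_apply_apply]
  refine Nat.card_congr ⟨fun g => ⟨g.1.trans g₀.symm, fun p => ?_⟩,
    fun c => ⟨c.1.trans g₀, fun p => ?_⟩, fun g => ?_, fun c => ?_⟩
  · simp only [Equiv.trans_apply, g.2 p]
    exact (hg₀' (g.1 p)).symm
  · simp only [Equiv.trans_apply, c.2 p]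
    exact hg₀ (c.1 p)
  · apply Subtype.ext
    apply Equiv.ext
    intro p
    simp
  · apply Subtype.ext
    apply Equiv.ext
    intro p
    simp

end PC

section Main

variable {l} {n : ℕ}

/-- the natural equivalence between the vertex type and the image subtype of an embedding -/
noncomputable def gEquiv (f : Vty l ↪ Fin n) : Vty l ≃ {x : Fin n // x ∈ Finset.univ.map f} :=
  (Equiv.ofInjective f f.injective).trans
    (Equiv.subtypeEquivRight (fun x => by simp [Set.mem_range, Finset.mem_map]))

lemma gEquiv_val (f : Vty l ↪ Fin n) (p : Vty l) : (gEquiv f p : Fin n) = f p := by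
  simp [gEquiv]

/-- the pair (image, induced permutation) of an embedding -/
noncomputable def Phi (f : Vty l ↪ Fin n) :
    (S : Finset (Fin n)) × Equiv.Perm {x : Fin n // x ∈ S} :=
  ⟨Finset.univ.map f, (gEquiv f).permCongr (rho l)⟩

lemma permCongr_gEquiv_apply (f : Vty l ↪ Fin n) (p : Vty l) :
    (gEquiv f).permCongr (rho l) (gEquiv f p) = gEquiv f (rho l p) := by
  simp [Equiv.permCongr_apply]

lemma phi_snd_prop (f : Vty l ↪ Fin n) (S : Finset (Fin n))
    (π : Equiv.Perm {x : Fin n // x ∈ S}) (hf : Phi f = ⟨S, π⟩)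
    (p : Vty l) (hm : f p ∈ S) : (π ⟨f p, hm⟩ : Fin n) = f (rho l p) := by
  unfold Phi at hf
  obtain ⟨h1, h2⟩ := Sigma.mk.inj_iff.mp hf
  subst h1
  have h3 : (gEquiv f).permCongr (rho l) = π := eq_of_heq h2
  subst h3
  rw [show (⟨f p, hm⟩ : {x : Fin n // x ∈ Finset.univ.map f}) = gEquiv f p from
    (Subtype.ext (gEquiv_val f p)).symm, permCongr_gEquiv_apply, gEquiv_val]

lemma phi_eq (f : Vty l ↪ Fin n) (S : Finset (Fin n))
    (π : Equiv.Perm {x : Fin n // x ∈ S}) (h1 : Finset.univ.map f = S)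
    (h2 : ∀ p (hm : f p ∈ S), (π ⟨f p, hm⟩ : Fin n) = f (rho l p)) : Phi f = ⟨S, π⟩ := by
  subst h1
  unfold Phi
  congr 1
  apply Equiv.ext
  intro x
  obtain ⟨p, rfl⟩ := (gEquiv f).surjective x
  have hm : f p ∈ Finset.univ.map f := Finset.mem_map_of_mem f (Finset.mem_univ p)
  apply Subtype.ext
  rw [permCongr_gEquiv_apply, gEquiv_val,
    show gEquiv f p = ⟨f p, hm⟩ from Subtype.ext (gEquiv_val f p), h2 p hm]

lemma card_fiber_eq (S : Finset (Fin n)) (π : Equiv.Perm {x : Fin n // x ∈ S}) :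
    Nat.card {f : Vty l ↪ Fin n // Phi f = ⟨S, π⟩} =
      Nat.card {g : Vty l ≃ {x : Fin n // x ∈ S} // ∀ p, g (rho l p) = π (g p)} := by
  apply Nat.card_congr
  have fwd : ∀ f : {f : Vty l ↪ Fin n // Phi f = ⟨S, π⟩},
      ∃ g : {g : Vty l ≃ {x : Fin n // x ∈ S} // ∀ p, g (rho l p) = π (g p)},
        ∀ p, (g.1 p : Fin n) = f.1 p := by
    rintro ⟨f, hf⟩
    have h1 : Finset.univ.map f = S := congrArg Sigma.fst hf
    have hmem : ∀ p, f p ∈ S := fun p => h1 ▸ Finset.mem_map_of_mem f (Finset.mem_univ p)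
    have hinj : Function.Injective (fun p : Vty l => (⟨f p, hmem p⟩ : {x : Fin n // x ∈ S})) :=
      fun p q h => f.injective (congrArg Subtype.val h)
    have hcard : Fintype.card (Vty l) = Fintype.card {x : Fin n // x ∈ S} := by
      rw [Fintype.card_coe, ← h1, Finset.card_map, Finset.card_univ]
    refine ⟨⟨Equiv.ofBijective _ ((Fintype.bijective_iff_injective_and_card _).mpr
      ⟨hinj, hcard⟩), fun p => ?_⟩, fun p => rfl⟩
    apply Subtype.ext
    show (f (rho l p) : Fin n) = _
    rw [show (Equiv.ofBijective _ ((Fintype.bijective_iff_injective_and_card _).mpr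
      ⟨hinj, hcard⟩)) p = ⟨f p, hmem p⟩ from rfl]
    exact (phi_snd_prop f S π hf p (hmem p)).symm
  choose F hF using fwd
  let bF : {g : Vty l ≃ {x : Fin n // x ∈ S} // ∀ p, g (rho l p) = π (g p)} →
      (Vty l ↪ Fin n) := fun g =>
    ⟨fun p => (g.1 p : Fin n), fun p q h => g.1.injective (Subtype.ext h)⟩
  have hbF : ∀ g, Phi (bF g) = ⟨S, π⟩ := by
    rintro ⟨g, hg⟩
    apply phi_eq
    · ext x
      simp only [Finset.mem_map, Finset.mem_univ, true_and, bF, Function.Embedding.coeFn_mk]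
      constructor
      · rintro ⟨p, rfl⟩
        exact (g p).2
      · intro hx
        exact ⟨g.symm ⟨x, hx⟩, by show ((g (g.symm ⟨x, hx⟩) : S) : Fin n) = x; rw [Equiv.apply_symm_apply]⟩
    · intro p hm
      show (π ⟨(g p : Fin n), hm⟩ : Fin n) = (g (rho l p) : Fin n)
      rw [show (⟨(g p : Fin n), hm⟩ : {x : Fin n // x ∈ S}) = g p from Subtype.ext rfl,
        ← hg p]
  refine ⟨F, fun g => ⟨bF g, hbF g⟩, ?_, ?_⟩
  · rintro ⟨f, hf⟩
    apply Subtype.ext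
    apply DFunLike.ext
    intro p
    exact hF ⟨f, hf⟩ p
  · intro g
    apply Subtype.ext
    apply Equiv.ext
    intro p
    apply Subtype.ext
    exact hF ⟨bF g, hbF g⟩ p

lemma card_fiber_value (hpos : ∀ x ∈ l, 0 < x) (S : Finset (Fin n))
    (π : Equiv.Perm {x : Fin n // x ∈ S}) (hfull : fullCycleType π = ↑l) :
    Nat.card {f : Vty l ↪ Fin n // Phi f = ⟨S, π⟩} =
      (∏ m ∈ Finset.univ.image l.get, Nat.factorial (Fintype.card {i : Fin l.length // l.get i = m})) *
        ∏ i : Fin l.length, l.get i := by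
  have hl := hl_of_hpos hpos
  rw [card_fiber_eq]
  have hcard : Fintype.card (Vty l) = Fintype.card {x : Fin n // x ∈ S} := by
    rw [card_Vty, ← sum_fullCycleType π, hfull, Multiset.sum_coe]
  have hct : (rho l).cycleType = π.cycleType := by
    rw [cycleType_eq_filter_fullCycleType, cycleType_eq_filter_fullCycleType (σ := π),
      fullCycleType_rho hpos, hfull]
  rw [card_semiconj hcard hct, Nat.card_congr (centEquiv hl), Nat.card_prod, Nat.card_pi]
  congr 1
  · rw [Nat.card_eq_fintype_card]
    exact DomMulAct.stabilizer_card' l.get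
  · simp [Nat.card_eq_fintype_card]

lemma count_subtype (m : ℕ) :
    Fintype.card {i : Fin l.length // l.get i = m} = Multiset.count m (↑l : Multiset ℕ) := by
  classical
  rw [Fintype.card_subtype, ← univ_val_map_get, Multiset.count_map, Finset.card,
    Finset.filter_val]
  congr 1
  apply Multiset.filter_congr
  intro x _
  exact eq_comm

lemma image_get_eq : Finset.univ.image l.get = (↑l : Multiset ℕ).toFinset := by
  ext m
  rw [← univ_val_map_get]
  simp [Finset.mem_image, Multiset.mem_toFinset, eq_comm]

lemma count_prod_eq (hpos : ∀ x ∈ l, 0 < x) {k : ℕ} (hsum : l.sum = k) :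
    ((∏ m ∈ Finset.univ.image l.get, Nat.factorial (Fintype.card {i : Fin l.length // l.get i = m})) *
        ∏ i : Fin l.length, l.get i) =
      ∏ ℓ ∈ Finset.Icc 1 k,
        Nat.factorial (Multiset.count ℓ (↑l : Multiset ℕ)) * ℓ ^ Multiset.count ℓ (↑l : Multiset ℕ) := by
  classical
  have hsub : (↑l : Multiset ℕ).toFinset ⊆ Finset.Icc 1 k := by
    intro x hx
    rw [Multiset.mem_toFinset] at hx
    have h1 : 0 < x := hpos x (by exact_mod_cast hx)
    have h2 : x ≤ (↑l : Multiset ℕ).sum :=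
      Multiset.single_le_sum (fun y _ => Nat.zero_le y) x hx
    rw [Multiset.sum_coe, hsum] at h2
    rw [Finset.mem_Icc]
    omega
  rw [show (∏ m ∈ Finset.univ.image l.get,
        Nat.factorial (Fintype.card {i : Fin l.length // l.get i = m})) =
      ∏ m ∈ (↑l : Multiset ℕ).toFinset, Nat.factorial (Multiset.count m (↑l : Multiset ℕ)) from
    Finset.prod_congr (image_get_eq) (fun m _ => by rw [count_subtype])]
  rw [show (∏ i : Fin l.length, l.get i) = (↑l : Multiset ℕ).prod from by
    rw [Finset.prod, univ_val_map_get]]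
  rw [Finset.prod_multiset_count_of_subset _ _ hsub]
  rw [Finset.prod_subset hsub (fun x _ hx => by
    rw [Multiset.count_eq_zero_of_notMem (by simpa [Multiset.mem_toFinset] using hx)]
    rfl)]
  rw [← Finset.prod_mul_distrib]

lemma w_eq {R : Type*} [CommRing R] (A : Matrix (Fin n) (Fin n) R) (f : Vty l ↪ Fin n) :
    (∏ p : Vty l, A (f p) (f (rho l p))) =
      ∏ i : {x : Fin n // x ∈ (Phi f).1}, A i.1 ((Phi f).2 i).1 := by
  unfold Phi
  dsimp only
  rw [← Equiv.prod_comp (gEquiv f)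
    (fun i : {x : Fin n // x ∈ Finset.univ.map f} =>
      A i.1 (((gEquiv f).permCongr (rho l)) i).1)]
  apply Finset.prod_congr rfl
  intro p _
  rw [permCongr_gEquiv_apply, gEquiv_val, gEquiv_val]

end Main

end EmbAux

theorem embCount_cycleCoverGraph {k : ℕ} (hk : 1 ≤ k) (lam : Nat.Partition k)
    {n : ℕ} {R : Type*} [CommRing R] (A : Matrix (Fin n) (Fin n) R) :
    embCount (cycleCoverGraph lam.parts) A =
      ((∏ ℓ ∈ Finset.Icc 1 k,
          (lam.parts.count ℓ).factorial * ℓ ^ (lam.parts.count ℓ) : ℕ) : R) *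
        ∑ S ∈ Finset.powersetCard k (Finset.univ : Finset (Fin n)),
          ∑ π ∈ Finset.univ.filter
              (fun π : Equiv.Perm {x : Fin n // x ∈ S} => fullCycleType π = lam.parts),
            ∏ i : {x : Fin n // x ∈ S}, A i.1 (π i).1 := by
  classical
  open EmbAux in
  set l : List ℕ := lam.parts.sort (· ≤ ·) with hldef
  have hcoe : (↑l : Multiset ℕ) = lam.parts := Multiset.sort_eq _ _
  have hpos : ∀ x ∈ l, 0 < x := fun x hx =>
    lam.parts_pos (by rw [← hcoe]; exact_mod_cast hx)
  have hsum : l.sum = k := by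
    have h := lam.parts_sum
    rw [← hcoe, Multiset.sum_coe] at h
    exact h
  -- the constant
  set N : ℕ := (∏ m ∈ Finset.univ.image l.get,
      Nat.factorial (Fintype.card {i : Fin l.length // l.get i = m})) *
    ∏ i : Fin l.length, l.get i with hN
  have hNval : N = ∏ ℓ ∈ Finset.Icc 1 k,
      (lam.parts.count ℓ).factorial * ℓ ^ (lam.parts.count ℓ) := by
    rw [hN, EmbAux.count_prod_eq hpos hsum]
    simp_rw [hcoe]
  -- rewrite the LHS as a sum over embeddings of `Vty l`
  have hL : embCount (cycleCoverGraph lam.parts) A =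
      ∑ f : EmbAux.Vty l ↪ Fin n, ∏ p : EmbAux.Vty l, A (f p) (f (EmbAux.rho l p)) := by
    unfold embCount cycleCoverGraph
    apply Finset.sum_congr rfl
    intro f _
    rw [Multiset.map_map]
    rfl
  rw [hL]
  -- fiberwise decomposition
  set t : Finset ((S : Finset (Fin n)) × Equiv.Perm {x : Fin n // x ∈ S}) :=
    (Finset.powersetCard k (Finset.univ : Finset (Fin n))).sigma
      (fun S => Finset.univ.filter
        (fun π : Equiv.Perm {x : Fin n // x ∈ S} => fullCycleType π = lam.parts)) with ht
  have hmaps : ∀ f : EmbAux.Vty l ↪ Fin n, f ∈ Finset.univ → EmbAux.Phi f ∈ t := by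
    intro f _
    rw [ht, Finset.mem_sigma]
    constructor
    · rw [Finset.mem_powersetCard_univ]
      show (Finset.univ.map f).card = k
      rw [Finset.card_map, Finset.card_univ, EmbAux.card_Vty, hsum]
    · rw [Finset.mem_filter]
      refine ⟨Finset.mem_univ _, ?_⟩
      show fullCycleType ((EmbAux.gEquiv f).permCongr (EmbAux.rho l)) = lam.parts
      rw [EmbAux.fullCycleType_permCongr, EmbAux.fullCycleType_rho hpos, hcoe]
  rw [← Finset.sum_fiberwise_of_maps_to hmaps
    (fun f => ∏ p : EmbAux.Vty l, A (f p) (f (EmbAux.rho l p)))]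
  -- rewrite the RHS double sum as a sum over the sigma finset
  rw [show (∑ S ∈ Finset.powersetCard k (Finset.univ : Finset (Fin n)),
      ∑ π ∈ Finset.univ.filter
          (fun π : Equiv.Perm {x : Fin n // x ∈ S} => fullCycleType π = lam.parts),
        ∏ i : {x : Fin n // x ∈ S}, A i.1 (π i).1) =
    ∑ q ∈ t, ∏ i : {x : Fin n // x ∈ q.1}, A i.1 (q.2 i).1 from
    (Finset.sum_sigma (Finset.powersetCard k (Finset.univ : Finset (Fin n)))
      (fun S => Finset.univ.filter
        (fun π : Equiv.Perm {x : Fin n // x ∈ S} => fullCycleType π = lam.parts))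
      (fun q => ∏ i : {x : Fin n // x ∈ q.1}, A i.1 (q.2 i).1)).symm]
  -- compute each fiber sum
  rw [Finset.mul_sum]
  apply Finset.sum_congr rfl
  rintro ⟨S, π⟩ hq
  rw [ht, Finset.mem_sigma, Finset.mem_filter] at hq
  have hfull : fullCycleType π = (↑l : Multiset ℕ) := by rw [hq.2.2, hcoe]
  have hconst : ∀ f ∈ Finset.univ.filter
      (fun f : EmbAux.Vty l ↪ Fin n => EmbAux.Phi f = ⟨S, π⟩),
      (∏ p : EmbAux.Vty l, A (f p) (f (EmbAux.rho l p))) =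
        ∏ i : {x : Fin n // x ∈ S}, A i.1 (π i).1 := by
    intro f hf
    rw [Finset.mem_filter] at hf
    exact (EmbAux.w_eq A f).trans (congrArg
      (fun q : (S : Finset (Fin n)) × Equiv.Perm {x : Fin n // x ∈ S} =>
        ∏ i : {x : Fin n // x ∈ q.1}, A i.1 (q.2 i).1) hf.2)
  rw [Finset.sum_congr rfl hconst, Finset.sum_const]
  have hcard : (Finset.univ.filter
      (fun f : EmbAux.Vty l ↪ Fin n => EmbAux.Phi f = ⟨S, π⟩)).card = N := by
    rw [← Fintype.card_subtype, ← Nat.card_eq_fintype_card,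
      EmbAux.card_fiber_value hpos S π hfull, hN]
  rw [hcard, nsmul_eq_mul, hNval]
end
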